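/- arXiv:2012.02694 — 4 statements merged into one kernel-verified Lean document; each statement's English description precedes it below -/
import Mathlib

section
/- Let I ⊆ ℝ be an interval, Λ ⊆ ℝ² open, and suppose g : I × Λ → ℝ, h : Λ → ℝ, ρ : I × Λ → [0,∞] are measurable with g > 0, h nowhere zero, and ∫_I ρ(s,p) g(s,p) ds ≥ 1 for all p ∈ Λ. Assume J satisfies the Jacobian-type identity g(s,p)³ J(s,p) = λ(p) g(s,p)⁴ with λ = h. Then by Hölder's inequality with exponents 4 and 4/3, ∫_I ρ⁴ |J| ds ≥ |λ(p)| / (∫_I g(s,p) ds)³ for every p ∈ Λ. -/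
open MeasureTheory Set ENNReal

/-- The Hölder-inequality step (exponents 4 and 4/3) in the modulus lower bound in the
Heisenberg group, combined with the substitution `g³ J = λ g⁴` (with `λ = h`). -/
theorem stmt2 (a b : ℝ) (Λ : Set (ℝ × ℝ)) (hΛ : IsOpen Λ)
    (g : ℝ → ℝ × ℝ → ℝ) (h : ℝ × ℝ → ℝ) (ρ : ℝ → ℝ × ℝ → ℝ≥0∞) (J : ℝ → ℝ × ℝ → ℝ)
    (hgm : Measurable fun x : ℝ × (ℝ × ℝ) => g x.1 x.2)
    (hhm : Measurable h)
    (hρm : Measurable fun x : ℝ × (ℝ × ℝ) => ρ x.1 x.2)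
    (hJm : Measurable fun x : ℝ × (ℝ × ℝ) => J x.1 x.2)
    (hg : ∀ s ∈ Set.Ioo a b, ∀ p ∈ Λ, 0 < g s p)
    (hh : ∀ p ∈ Λ, h p ≠ 0)
    (hadm : ∀ p ∈ Λ, 1 ≤ ∫⁻ s in Set.Ioo a b, ρ s p * ENNReal.ofReal (g s p))
    (hJ : ∀ s ∈ Set.Ioo a b, ∀ p ∈ Λ, g s p ^ 3 * J s p = h p * g s p ^ 4) :
    ∀ p ∈ Λ,
      ENNReal.ofReal (|h p| / (∫ s in Set.Ioo a b, g s p) ^ 3) ≤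
        ∫⁻ s in Set.Ioo a b, (ρ s p) ^ 4 * ENNReal.ofReal |J s p| := by
  intro p hp
  have hgp : Measurable (fun s => g s p) := hgm.comp (measurable_id.prodMk measurable_const)
  have hρp : Measurable (fun s => ρ s p) := hρm.comp (measurable_id.prodMk measurable_const)
  -- On Ioo a b, |J s p| = |h p| * g s p
  have hJg : ∀ s ∈ Set.Ioo a b, |J s p| = |h p| * g s p := by
    intro s hs
    have hgpos := hg s hs p hp
    have h3 : g s p ^ 3 ≠ 0 := pow_ne_zero _ hgpos.ne'
    have e : g s p ^ 3 * J s p = g s p ^ 3 * (h p * g s p) := by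
      rw [hJ s hs p hp]; ring
    rw [mul_left_cancel₀ h3 e, abs_mul, abs_of_pos hgpos]
  -- Rewrite the RHS integral
  have hre : (∫⁻ s in Set.Ioo a b, (ρ s p) ^ 4 * ENNReal.ofReal |J s p|)
      = ENNReal.ofReal |h p| * ∫⁻ s in Set.Ioo a b, (ρ s p) ^ 4 * ENNReal.ofReal (g s p) := by
    rw [← lintegral_const_mul _ (by exact (hρp.pow_const 4).mul (hgp.ennreal_ofReal))]
    refine setLIntegral_congr_fun measurableSet_Ioo (fun s hs => ?_)
    rw [hJg s hs, ENNReal.ofReal_mul (abs_nonneg _)]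
    ring
  rw [hre]
  set c := ∫ s in Set.Ioo a b, g s p with hc
  have hcnn : 0 ≤ c := setIntegral_nonneg measurableSet_Ioo fun s hs => (hg s hs p hp).le
  rcases eq_or_lt_of_le hcnn with hc0 | hcpos
  · rw [← hc0]
    simp
  · -- g is integrable on Ioo a b (otherwise c = 0)
    have hint : IntegrableOn (fun s => g s p) (Set.Ioo a b) := by
      by_contra hni
      rw [hc, integral_undef hni] at hcpos
      exact lt_irrefl _ hcpos
    have hB : (∫⁻ s in Set.Ioo a b, ENNReal.ofReal (g s p)) = ENNReal.ofReal c := by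
      rw [hc, ofReal_integral_eq_lintegral_ofReal hint]
      exact (ae_restrict_iff' measurableSet_Ioo).2
        (Filter.Eventually.of_forall fun s hs => (hg s hs p hp).le)
    set B := ENNReal.ofReal c with hBdef
    have hB0 : B ≠ 0 := by simpa [hBdef] using hcpos
    have hBt : B ≠ ⊤ := ofReal_ne_top
    set A := ∫⁻ s in Set.Ioo a b, (ρ s p) ^ 4 * ENNReal.ofReal (g s p) with hA
    -- Hölder with exponents 4, 4/3
    have hconj : Real.HolderConjugate 4 (4/3) := ⟨by norm_num, by norm_num, by norm_num⟩
    have hH := ENNReal.lintegral_mul_le_Lp_mul_Lq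
      (volume.restrict (Set.Ioo a b)) hconj
      (f := fun s => ρ s p * (ENNReal.ofReal (g s p)) ^ (1/4 : ℝ))
      (g := fun s => (ENNReal.ofReal (g s p)) ^ (3/4 : ℝ))
      ((hρp.mul (hgp.ennreal_ofReal.pow_const _)).aemeasurable)
      ((hgp.ennreal_ofReal.pow_const _).aemeasurable)
    have e1 : (∫⁻ s in Set.Ioo a b,
        ((fun s => ρ s p * (ENNReal.ofReal (g s p)) ^ (1/4 : ℝ)) *
         (fun s => (ENNReal.ofReal (g s p)) ^ (3/4 : ℝ))) s)
        = ∫⁻ s in Set.Ioo a b, ρ s p * ENNReal.ofReal (g s p) := by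
      refine setLIntegral_congr_fun measurableSet_Ioo
        (fun s hs => ?_)
      have hg0 : ENNReal.ofReal (g s p) ≠ 0 := by
        simpa using (hg s hs p hp)
      simp only [Pi.mul_apply]
      rw [mul_assoc, ← ENNReal.rpow_add _ _ hg0 ofReal_ne_top]
      norm_num
    have e2 : (∫⁻ s in Set.Ioo a b,
        (ρ s p * (ENNReal.ofReal (g s p)) ^ (1/4 : ℝ)) ^ (4:ℝ)) = A := by
      refine setLIntegral_congr_fun measurableSet_Ioo
        (fun s hs => ?_)
      rw [ENNReal.mul_rpow_of_nonneg _ _ (by norm_num), ← ENNReal.rpow_natCast (ρ s p) 4,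
        ← ENNReal.rpow_mul]
      norm_num
    have e3 : (∫⁻ s in Set.Ioo a b,
        ((ENNReal.ofReal (g s p)) ^ (3/4 : ℝ)) ^ ((4:ℝ)/3)) = B := by
      rw [← hB]
      refine setLIntegral_congr_fun measurableSet_Ioo
        (fun s hs => ?_)
      rw [← ENNReal.rpow_mul]
      norm_num
    rw [e1, e2, e3] at hH
    have h1 : (1:ℝ≥0∞) ≤ A ^ (1/(4:ℝ)) * B ^ (1/((4:ℝ)/3)) := le_trans (hadm p hp) hH
    have h2 : (1:ℝ≥0∞) ≤ A * B ^ 3 := by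
      have := ENNReal.rpow_le_rpow h1 (by norm_num : (0:ℝ) ≤ 4)
      rw [ENNReal.one_rpow, ENNReal.mul_rpow_of_nonneg _ _ (by norm_num),
        ← ENNReal.rpow_mul, ← ENNReal.rpow_mul] at this
      norm_num at this
      exact this
    -- Finish
    have hgoal : ENNReal.ofReal (|h p| / c ^ 3) = ENNReal.ofReal |h p| / B ^ 3 := by
      rw [ENNReal.ofReal_div_of_pos (by positivity), ENNReal.ofReal_pow hcnn]
    rw [hgoal]
    rw [ENNReal.div_le_iff (by positivity) (ENNReal.pow_ne_top hBt)]
    calc ENNReal.ofReal |h p| = ENNReal.ofReal |h p| * 1 := (mul_one _).symm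
      _ ≤ ENNReal.ofReal |h p| * (A * B ^ 3) := mul_le_mul_right h2 _
      _ = ENNReal.ofReal |h p| * A * B ^ 3 := by ring
end

section
/- Let q : U → ℂ be holomorphic and nowhere zero on a domain U ⊆ ℂ, and Φ : I × J → U a C² diffeomorphism (I, J intervals) such that for every p ∈ J and s ∈ I, q(Φ(s,p))·(∂_s Φ(s,p))² > 0 (each Φ(·,p) is a horizontal trajectory of q). Set μ(s,p) = √(q(Φ(s,p)) (∂_s Φ(s,p))²) > 0. Then ∂_s ( μ · ∂_p Φ / ∂_s Φ ) = ∂_p μ; in particular ∂_s ( Im( μ ∂_p Φ / ∂_s Φ ) ) = 0. -/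
open Set Complex

/-- `μ(s,p) = √(q(Φ(s,p)) (∂_s Φ(s,p))²)`, the positive square root of the positive real
number `q(Φ)(∂_s Φ)²` along a horizontal foliation. -/
noncomputable def horMu (q : ℂ → ℂ) (Φ : ℝ → ℝ → ℂ) (s p : ℝ) : ℝ :=
  Real.sqrt (q (Φ s p) * (deriv (fun s' => Φ s' p) s) ^ 2).re

/-- If `q` is holomorphic and nowhere zero on the domain `U`, and `Φ : I × J → U` is a C²
diffeomorphism whose curves `Φ(·,p)` are horizontal trajectories of `q`, then
`∂_s (μ ∂_p Φ / ∂_s Φ) = ∂_p μ`; in particular `∂_s Im(μ ∂_p Φ / ∂_s Φ) = 0`. -/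
theorem stmt3 (U : Set ℂ) (hUo : IsOpen U) (hUc : IsConnected U)
    (q : ℂ → ℂ) (hq : DifferentiableOn ℂ q U) (hq0 : ∀ z ∈ U, q z ≠ 0)
    (a b c d : ℝ) (Φ : ℝ → ℝ → ℂ)
    (hΦ : ContDiffOn ℝ 2 (fun x : ℝ × ℝ => Φ x.1 x.2) (Set.Ioo a b ×ˢ Set.Ioo c d))
    (hbij : Set.BijOn (fun x : ℝ × ℝ => Φ x.1 x.2) (Set.Ioo a b ×ˢ Set.Ioo c d) U)
    (hhor : ∀ s ∈ Set.Ioo a b, ∀ p ∈ Set.Ioo c d,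
      (q (Φ s p) * (deriv (fun s' => Φ s' p) s) ^ 2).im = 0 ∧
      0 < (q (Φ s p) * (deriv (fun s' => Φ s' p) s) ^ 2).re) :
    ∀ s ∈ Set.Ioo a b, ∀ p ∈ Set.Ioo c d,
      (deriv (fun s' => (horMu q Φ s' p : ℂ) * deriv (fun p' => Φ s' p') p /
          deriv (fun s'' => Φ s'' p) s') s
        = (deriv (fun p' => horMu q Φ s p') p : ℂ)) ∧
      deriv (fun s' => ((horMu q Φ s' p : ℂ) * deriv (fun p' => Φ s' p') p /
          deriv (fun s'' => Φ s'' p) s').im) s = 0 := by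
  intro s₀ hs₀ p₀ hp₀
  have hSo : IsOpen (Set.Ioo a b ×ˢ Set.Ioo c d) := isOpen_Ioo.prod isOpen_Ioo
  set S := Set.Ioo a b ×ˢ Set.Ioo c d with hSdef
  set F : ℝ × ℝ → ℂ := fun x => Φ x.1 x.2 with hFdef
  have hx₀ : ((s₀, p₀) : ℝ × ℝ) ∈ S := ⟨hs₀, hp₀⟩
  have hFdiff : ∀ x ∈ S, HasFDerivAt F (fderiv ℝ F x) x := fun x hx =>
    ((hΦ.differentiableOn two_ne_zero).differentiableAt (hSo.mem_nhds hx)).hasFDerivAt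
  set A : ℝ × ℝ → ℂ := fun x => fderiv ℝ F x (1, 0) with hAdef
  set B : ℝ × ℝ → ℂ := fun x => fderiv ℝ F x (0, 1) with hBdef
  -- slice derivatives
  have hslS : ∀ s p, (s, p) ∈ S → HasDerivAt (fun s' => Φ s' p) (A (s, p)) s := by
    intro s p hx
    exact (hFdiff (s, p) hx).comp_hasDerivAt s ((hasDerivAt_id s).prodMk (hasDerivAt_const s p))
  have hslP : ∀ s p, (s, p) ∈ S → HasDerivAt (fun p' => Φ s p') (B (s, p)) p := by
    intro s p hx
    exact (hFdiff (s, p) hx).comp_hasDerivAt p ((hasDerivAt_const p s).prodMk (hasDerivAt_id p))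
  have hreS : ∀ s p, (s, p) ∈ S → deriv (fun s' => Φ s' p) s = A (s, p) :=
    fun s p hx => (hslS s p hx).deriv
  have hreP : ∀ s p, (s, p) ∈ S → deriv (fun p' => Φ s p') p = B (s, p) :=
    fun s p hx => (hslP s p hx).deriv
  set h : ℝ × ℝ → ℂ := fun x => q (F x) * A x ^ 2 with hhdef
  have hRe : ∀ s p, (s, p) ∈ S → (h (s, p)).im = 0 ∧ 0 < (h (s, p)).re := by
    intro s p hx
    have := hhor s hx.1 p hx.2
    rwa [hreS s p hx] at this
  have hA0 : ∀ s p, (s, p) ∈ S → A (s, p) ≠ 0 := by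
    intro s p hx hA
    have h2 := (hRe s p hx).2
    rw [hhdef] at h2
    simp only [hA] at h2
    norm_num at h2
  set μ : ℝ × ℝ → ℝ := fun x => Real.sqrt (h x).re with hμdef
  have hμpos : ∀ s p, (s, p) ∈ S → 0 < μ (s, p) :=
    fun s p hx => Real.sqrt_pos.2 (hRe s p hx).2
  have hμeq : ∀ s p, (s, p) ∈ S → horMu q Φ s p = μ (s, p) := by
    intro s p hx
    rw [horMu, hreS s p hx]
  set g : ℝ × ℝ → ℂ := fun x => (μ x : ℂ) / A x with hgdef
  have hμsq : ∀ s p, (s, p) ∈ S → ((μ (s, p) : ℝ) : ℂ) ^ 2 = h (s, p) := by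
    intro s p hx
    have h1 : μ (s, p) ^ 2 = (h (s, p)).re := Real.sq_sqrt (hRe s p hx).2.le
    rw [← Complex.ofReal_pow, h1]
    exact Complex.ext (Complex.ofReal_re _) (by simp [(hRe s p hx).1])
  have hgsq : ∀ s p, (s, p) ∈ S → g (s, p) ^ 2 = q (F (s, p)) := by
    intro s p hx
    have hA := hA0 s p hx
    calc g (s, p) ^ 2 = ((μ (s, p) : ℝ) : ℂ) ^ 2 / A (s, p) ^ 2 := div_pow _ _ 2
      _ = q (F (s, p)) * A (s, p) ^ 2 / A (s, p) ^ 2 := by rw [hμsq s p hx]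
      _ = q (F (s, p)) := mul_div_cancel_right₀ _ (pow_ne_zero 2 hA)
  have hg0 : ∀ s p, (s, p) ∈ S → g (s, p) ≠ 0 := fun s p hx =>
    div_ne_zero (by exact_mod_cast (hμpos s p hx).ne') (hA0 s p hx)
  -- second-order data at the base point
  have hF' : HasFDerivAt F (fderiv ℝ F (s₀, p₀)) (s₀, p₀) := hFdiff _ hx₀
  have hfC1 : ContDiffOn ℝ 1 (fderiv ℝ F) S := hΦ.fderiv_of_isOpen hSo (by norm_num)
  set f2 : (ℝ × ℝ) →L[ℝ] (ℝ × ℝ) →L[ℝ] ℂ := fderiv ℝ (fderiv ℝ F) (s₀, p₀) with hf2def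
  have hfd2 : HasFDerivAt (fderiv ℝ F) f2 (s₀, p₀) :=
    ((hfC1.differentiableOn one_ne_zero).differentiableAt (hSo.mem_nhds hx₀)).hasFDerivAt
  have hA' : HasFDerivAt A
      ((ContinuousLinearMap.apply ℝ ℂ ((1 : ℝ), (0 : ℝ))).comp f2) (s₀, p₀) :=
    (ContinuousLinearMap.apply ℝ ℂ ((1 : ℝ), (0 : ℝ))).hasFDerivAt.comp _ hfd2
  have hB' : HasFDerivAt B
      ((ContinuousLinearMap.apply ℝ ℂ ((0 : ℝ), (1 : ℝ))).comp f2) (s₀, p₀) :=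
    (ContinuousLinearMap.apply ℝ ℂ ((0 : ℝ), (1 : ℝ))).hasFDerivAt.comp _ hfd2
  have hsymm : f2 (1, 0) (0, 1) = f2 (0, 1) (1, 0) :=
    (hΦ.contDiffAt (hSo.mem_nhds hx₀)).isSymmSndFDerivAt (by simp) (1, 0) (0, 1)
  -- derivative of q ∘ F
  have hFU : F (s₀, p₀) ∈ U := hbij.mapsTo hx₀
  have hqz : DifferentiableAt ℂ q (F (s₀, p₀)) := hq.differentiableAt (hUo.mem_nhds hFU)
  set q' : ℂ := deriv q (F (s₀, p₀)) with hq'def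
  have hqF : HasFDerivAt (fun x => q (F x))
      ((((1 : ℂ →L[ℂ] ℂ).smulRight q').restrictScalars ℝ).comp (fderiv ℝ F (s₀, p₀)))
      (s₀, p₀) :=
    (hqz.hasDerivAt.hasFDerivAt.restrictScalars ℝ).comp _ hF'
  have hAd : DifferentiableAt ℝ A (s₀, p₀) := hA'.differentiableAt
  have hBd : DifferentiableAt ℝ B (s₀, p₀) := hB'.differentiableAt
  have hhd : DifferentiableAt ℝ h (s₀, p₀) := hqF.differentiableAt.mul (hAd.pow 2)
  have hμd : DifferentiableAt ℝ μ (s₀, p₀) := by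
    have hre : DifferentiableAt ℝ (fun x => (h x).re) (s₀, p₀) :=
      Complex.reCLM.differentiableAt.comp _ hhd
    exact (hre.hasFDerivAt.sqrt (hRe s₀ p₀ hx₀).2.ne').differentiableAt
  have hμC : DifferentiableAt ℝ (fun x => ((μ x : ℝ) : ℂ)) (s₀, p₀) :=
    Complex.ofRealCLM.differentiableAt.comp _ hμd
  have hgd : DifferentiableAt ℝ g (s₀, p₀) := by
    have h1 : DifferentiableAt ℝ (fun x => ((μ x : ℝ) : ℂ) * (A x)⁻¹) (s₀, p₀) :=
      hμC.mul (hAd.inv (hA0 s₀ p₀ hx₀))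
    simpa [hgdef, div_eq_mul_inv] using h1
  set G : (ℝ × ℝ) →L[ℝ] ℂ := fderiv ℝ g (s₀, p₀) with hGdef
  have hg' : HasFDerivAt g G (s₀, p₀) := hgd.hasFDerivAt
  -- g² = q ∘ F near the base point, hence derivatives agree
  have hev : (fun x => g x * g x) =ᶠ[nhds (s₀, p₀)] fun x => q (F x) := by
    filter_upwards [hSo.mem_nhds hx₀] with x hx
    have := hgsq x.1 x.2 hx
    rwa [sq] at this
  have hqF2 : HasFDerivAt (fun x => g x * g x)
      ((((1 : ℂ →L[ℂ] ℂ).smulRight q').restrictScalars ℝ).comp (fderiv ℝ F (s₀, p₀)))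
      (s₀, p₀) := hqF.congr_of_eventuallyEq hev
  have huniq := (hg'.mul hg').unique hqF2
  have hkey : ∀ v : ℝ × ℝ,
      g (s₀, p₀) * G v + g (s₀, p₀) * G v = fderiv ℝ F (s₀, p₀) v * q' := by
    intro v
    have := ContinuousLinearMap.ext_iff.1 huniq v
    simpa [smul_eq_mul] using this
  have hmain : G (1, 0) * B (s₀, p₀) = G (0, 1) * A (s₀, p₀) := by
    have e1 := hkey (1, 0)
    have e2 := hkey (0, 1)
    have h2 : (2 : ℂ) * g (s₀, p₀) * (G (1, 0) * B (s₀, p₀) - G (0, 1) * A (s₀, p₀)) = 0 := by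
      have hA : fderiv ℝ F (s₀, p₀) ((1 : ℝ), (0 : ℝ)) = A (s₀, p₀) := rfl
      have hB : fderiv ℝ F (s₀, p₀) ((0 : ℝ), (1 : ℝ)) = B (s₀, p₀) := rfl
      rw [hA] at e1; rw [hB] at e2
      linear_combination B (s₀, p₀) * e1 - A (s₀, p₀) * e2
    have hne : (2 : ℂ) * g (s₀, p₀) ≠ 0 := mul_ne_zero two_ne_zero (hg0 s₀ p₀ hx₀)
    have := (mul_eq_zero.1 h2).resolve_left hne
    exact sub_eq_zero.1 this
  -- the s-slice of g·B
  have hγs : HasDerivAt (fun s' => ((s', p₀) : ℝ × ℝ)) ((1 : ℝ), (0 : ℝ)) s₀ :=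
    (hasDerivAt_id s₀).prodMk (hasDerivAt_const s₀ p₀)
  have hgS : HasDerivAt (fun s' => g (s', p₀)) (G (1, 0)) s₀ := by
    have := hg'.comp_hasDerivAt s₀ hγs; exact this
  have hBS : HasDerivAt (fun s' => B (s', p₀)) (f2 (1, 0) (0, 1)) s₀ := by
    have := hB'.comp_hasDerivAt s₀ hγs
    exact this
  have hprodS : HasDerivAt (fun s' => g (s', p₀) * B (s', p₀))
      (G (1, 0) * B (s₀, p₀) + g (s₀, p₀) * f2 (1, 0) (0, 1)) s₀ := hgS.mul hBS
  -- it agrees with the function in the statement near s₀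
  have hevS : (fun s' => (horMu q Φ s' p₀ : ℂ) * deriv (fun p' => Φ s' p') p₀ /
      deriv (fun s'' => Φ s'' p₀) s') =ᶠ[nhds s₀] fun s' => g (s', p₀) * B (s', p₀) := by
    filter_upwards [isOpen_Ioo.mem_nhds hs₀] with s' hs'
    have hx : ((s', p₀) : ℝ × ℝ) ∈ S := ⟨hs', hp₀⟩
    rw [hμeq s' p₀ hx, hreP s' p₀ hx, hreS s' p₀ hx, hgdef, mul_div_right_comm]
  have hL : HasDerivAt (fun s' => (horMu q Φ s' p₀ : ℂ) * deriv (fun p' => Φ s' p') p₀ /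
      deriv (fun s'' => Φ s'' p₀) s')
      (G (1, 0) * B (s₀, p₀) + g (s₀, p₀) * f2 (1, 0) (0, 1)) s₀ :=
    hprodS.congr_of_eventuallyEq hevS
  -- the p-slice of g·A
  have hγp : HasDerivAt (fun p' => ((s₀, p') : ℝ × ℝ)) ((0 : ℝ), (1 : ℝ)) p₀ :=
    (hasDerivAt_const p₀ s₀).prodMk (hasDerivAt_id p₀)
  have hgP : HasDerivAt (fun p' => g (s₀, p')) (G (0, 1)) p₀ := hg'.comp_hasDerivAt p₀ hγp
  have hAP : HasDerivAt (fun p' => A (s₀, p')) (f2 (0, 1) (1, 0)) p₀ := by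
    have := hA'.comp_hasDerivAt p₀ hγp
    exact this
  set cc : ℂ := G (0, 1) * A (s₀, p₀) + g (s₀, p₀) * f2 (0, 1) (1, 0) with hccdef
  have hprodP : HasDerivAt (fun p' => g (s₀, p') * A (s₀, p')) cc p₀ := hgP.mul hAP
  have hevP : (fun p' => ((horMu q Φ s₀ p' : ℝ) : ℂ)) =ᶠ[nhds p₀]
      fun p' => g (s₀, p') * A (s₀, p') := by
    filter_upwards [isOpen_Ioo.mem_nhds hp₀] with p' hp'
    have hx : ((s₀, p') : ℝ × ℝ) ∈ S := ⟨hs₀, hp'⟩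
    rw [hμeq s₀ p' hx, hgdef, div_mul_cancel₀ _ (hA0 s₀ p' hx)]
  have hCd : HasDerivAt (fun p' => ((horMu q Φ s₀ p' : ℝ) : ℂ)) cc p₀ :=
    hprodP.congr_of_eventuallyEq hevP
  have hRd : HasDerivAt (fun p' => horMu q Φ s₀ p') cc.re p₀ := by
    have := Complex.reCLM.hasFDerivAt.comp_hasDerivAt p₀ hCd
    exact this
  have hcre : cc = (cc.re : ℂ) := by
    have h2 : HasDerivAt (fun p' => ((horMu q Φ s₀ p' : ℝ) : ℂ)) ((cc.re : ℝ) : ℂ) p₀ := by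
      have := Complex.ofRealCLM.hasFDerivAt.comp_hasDerivAt p₀ hRd
      exact this
    exact hCd.unique h2
  have hLc : G (1, 0) * B (s₀, p₀) + g (s₀, p₀) * f2 (1, 0) (0, 1) = cc := by
    rw [hccdef, hmain, hsymm]
  constructor
  · rw [hL.deriv, hCd.deriv, hLc]
  · have him : HasDerivAt (fun s' => ((horMu q Φ s' p₀ : ℂ) * deriv (fun p' => Φ s' p') p₀ /
        deriv (fun s'' => Φ s'' p₀) s').im)
        (G (1, 0) * B (s₀, p₀) + g (s₀, p₀) * f2 (1, 0) (0, 1)).im s₀ := by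
      have := Complex.imCLM.hasFDerivAt.comp_hasDerivAt s₀ hL
      exact this
    rw [him.deriv, hLc, hcre]
    simp
end

section
/- Let Ω ⊆ ℍ be a connected open set and q, q' : Ω → ℂ smooth nowhere-vanishing functions representing quadratic differentials with the same horizontal trajectories, so q' = f q for a smooth positive function f : Ω → (0,∞). If both q and q' satisfy the equation Z̄(|q|²) + q̄ Z̄ q = 0 (i.e. B₂ q = 0 and B₂ q' = 0), then f is constant. Consequently a quadratic differential in the kernel of B₂ with prescribed horizontal trajectories is unique up to a positive multiplicative constant. -/
open Complex ComplexConjugate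

/-- `∂_x` on the Heisenberg group `ℍ = ℂ × ℝ`. -/
noncomputable def dX (f : ℂ × ℝ → ℂ) (p : ℂ × ℝ) : ℂ := fderiv ℝ f p (1, 0)

/-- `∂_y` on `ℍ = ℂ × ℝ`. -/
noncomputable def dY (f : ℂ × ℝ → ℂ) (p : ℂ × ℝ) : ℂ := fderiv ℝ f p (Complex.I, 0)

/-- `∂_t` on `ℍ = ℂ × ℝ`. -/
noncomputable def dT (f : ℂ × ℝ → ℂ) (p : ℂ × ℝ) : ℂ := fderiv ℝ f p (0, 1)

/-- The vector field `Z̄ = ∂_z̄ − i z ∂_t`, with `∂_z̄ = (∂_x + i ∂_y)/2`. -/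
noncomputable def Zbar (f : ℂ × ℝ → ℂ) (p : ℂ × ℝ) : ℂ :=
  (dX f p + Complex.I * dY f p) / 2 - Complex.I * p.1 * dT f p

/-- The operator `B₂` applied to (a representative of) a quadratic differential `q`:
`B₂ q = Z̄(|q|²) + q̄ Z̄ q`. -/
noncomputable def B2fun (q : ℂ × ℝ → ℂ) (p : ℂ × ℝ) : ℂ :=
  Zbar (fun x => ((‖q x‖ ^ 2 : ℝ) : ℂ)) p + conj (q p) * Zbar q p

theorem Zbar_congr' {g h : ℂ × ℝ → ℂ} {p : ℂ × ℝ} (he : g =ᶠ[nhds p] h) :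
    Zbar g p = Zbar h p := by
  unfold Zbar dX dY dT; rw [he.fderiv_eq]

theorem Zbar_mul' {g h : ℂ × ℝ → ℂ} {p : ℂ × ℝ} (hg : DifferentiableAt ℝ g p)
    (hh : DifferentiableAt ℝ h p) :
    Zbar (fun x => g x * h x) p = g p * Zbar h p + h p * Zbar g p := by
  unfold Zbar dX dY dT
  rw [fderiv_fun_mul hg hh]
  simp only [ContinuousLinearMap.add_apply, ContinuousLinearMap.smul_apply, smul_eq_mul]
  ring

/-- Step A: the factor `f` is CR (`Z̄ f = 0`) on `Ω`. -/
theorem stmt10_stepA (Ω : Set (ℂ × ℝ)) (hΩo : IsOpen Ω)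
    (q q' : ℂ × ℝ → ℂ) (f : ℂ × ℝ → ℝ)
    (hq : ContDiffOn ℝ (⊤ : ℕ∞) q Ω)
    (hf : ContDiffOn ℝ (⊤ : ℕ∞) f Ω)
    (hq0 : ∀ p ∈ Ω, q p ≠ 0)
    (hfpos : ∀ p ∈ Ω, 0 < f p)
    (hfq : ∀ p ∈ Ω, q' p = (f p : ℂ) * q p)
    (hB2q : ∀ p ∈ Ω, B2fun q p = 0)
    (hB2q' : ∀ p ∈ Ω, B2fun q' p = 0) :
    ∀ p ∈ Ω, Zbar (fun x => ((f x : ℝ) : ℂ)) p = 0 := by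
  intro p hp
  have hnh : Ω ∈ nhds p := hΩo.mem_nhds hp
  have hqd : DifferentiableAt ℝ q p :=
    (hq.contDiffAt hnh).differentiableAt (by simp)
  have hfd : DifferentiableAt ℝ f p :=
    (hf.contDiffAt hnh).differentiableAt (by simp)
  have hFd : DifferentiableAt ℝ (fun x => ((f x : ℝ) : ℂ)) p :=
    Complex.ofRealCLM.differentiableAt.comp p hfd
  have hcq : DifferentiableAt ℝ (fun x => conj (q x)) p := by
    exact (Complex.conjCLE : ℂ ≃L[ℝ] ℂ).differentiableAt.comp p hqd
  set N : ℂ × ℝ → ℂ := fun x => conj (q x) * q x with hN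
  have hNd : DifferentiableAt ℝ N p := hcq.mul hqd
  have habs : ∀ (g : ℂ × ℝ → ℂ) (x : ℂ × ℝ),
      ((‖g x‖ ^ 2 : ℝ) : ℂ) = conj (g x) * g x := by
    intro g x
    rw [← Complex.normSq_eq_norm_sq]
    exact Complex.normSq_eq_conj_mul_self
  have hB2qN : Zbar N p + conj (q p) * Zbar q p = 0 := by
    have := hB2q p hp
    unfold B2fun at this
    rwa [show (fun x => ((‖q x‖ ^ 2 : ℝ) : ℂ)) = N from funext (habs q)] at this
  have heq' : q' =ᶠ[nhds p] fun x => ((f x : ℝ) : ℂ) * q x :=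
    Filter.eventuallyEq_of_mem hnh hfq
  have heqN : (fun x => ((‖q' x‖ ^ 2 : ℝ) : ℂ))
      =ᶠ[nhds p] fun x => ((f x : ℝ) : ℂ) * (((f x : ℝ) : ℂ) * N x) := by
    filter_upwards [hnh] with x hx
    rw [habs q', hfq x hx]
    simp [hN]
    ring
  have hZq' : Zbar q' p = (f p : ℂ) * Zbar q p + q p * Zbar (fun x => ((f x : ℝ) : ℂ)) p := by
    rw [Zbar_congr' heq', Zbar_mul' hFd hqd]
  have hZN' : Zbar (fun x => ((‖q' x‖ ^ 2 : ℝ) : ℂ)) p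
      = (f p : ℂ) * ((f p : ℝ) * Zbar N p + N p * Zbar (fun x => ((f x : ℝ) : ℂ)) p)
        + ((f p : ℝ) * N p) * Zbar (fun x => ((f x : ℝ) : ℂ)) p := by
    rw [Zbar_congr' heqN, Zbar_mul' (h := fun x => ((f x : ℝ) : ℂ) * N x) hFd (hFd.mul hNd), Zbar_mul' hFd hNd]
  have h2 := hB2q' p hp
  unfold B2fun at h2
  rw [hZN', hZq', heq'.self_of_nhds] at h2
  have hconj : conj ((f p : ℂ) * q p) = (f p : ℂ) * conj (q p) := by
    simp [map_mul]
  rw [hconj] at h2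
  set u := Zbar (fun x => ((f x : ℝ) : ℂ)) p with hu
  have key : 3 * (f p : ℂ) * N p * u = 0 := by
    have : (f p : ℂ) * (f p : ℂ) * (Zbar N p + conj (q p) * Zbar q p)
        + 3 * (f p : ℂ) * N p * u = 0 := by
      rw [← h2]; simp only [hN]; ring
    rwa [hB2qN, mul_zero, zero_add] at this
  have hf0 : (f p : ℂ) ≠ 0 := by
    exact_mod_cast (hfpos p hp).ne'
  have hN0 : N p ≠ 0 := mul_ne_zero (by simpa using hq0 p hp) (hq0 p hp)
  have h3 : (3 : ℂ) ≠ 0 := by norm_num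
  rcases mul_eq_zero.1 key with h | h
  · exact absurd h (by exact mul_ne_zero (mul_ne_zero h3 hf0) hN0)
  · exact h

/-- Step B: real and imaginary parts of the CR equation. -/
theorem stmt10_stepB (f : ℂ × ℝ → ℝ) (p : ℂ × ℝ) (hfd : DifferentiableAt ℝ f p)
    (h : Zbar (fun x => ((f x : ℝ) : ℂ)) p = 0) :
    fderiv ℝ f p (1,0) = -2 * p.1.im * fderiv ℝ f p (0,1) ∧
    fderiv ℝ f p (Complex.I,0) = 2 * p.1.re * fderiv ℝ f p (0,1) := by
  have hF : fderiv ℝ (fun x => ((f x : ℝ) : ℂ)) p = Complex.ofRealCLM.comp (fderiv ℝ f p) :=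
    (Complex.ofRealCLM.hasFDerivAt.comp p hfd.hasFDerivAt).fderiv
  unfold Zbar dX dY dT at h
  rw [hF] at h
  simp only [ContinuousLinearMap.coe_comp', Function.comp_apply, Complex.ofRealCLM_apply] at h
  set a := fderiv ℝ f p (1,0)
  set b := fderiv ℝ f p (Complex.I,0)
  set c := fderiv ℝ f p (0,1)
  rw [Complex.ext_iff] at h
  obtain ⟨h1, h2⟩ := h
  simp [Complex.div_re, Complex.div_im, Complex.normSq] at h1 h2
  constructor <;> nlinarith [h1, h2]

set_option maxHeartbeats 1000000 in
/-- Step C: the `∂_t` derivative vanishes, by symmetry of second derivatives. -/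
theorem stmt10_stepC (Ω : Set (ℂ × ℝ)) (hΩo : IsOpen Ω) (f : ℂ × ℝ → ℝ)
    (hf : ContDiffOn ℝ (⊤ : ℕ∞) f Ω) (p : ℂ × ℝ) (hp : p ∈ Ω)
    (key1 : ∀ x ∈ Ω, fderiv ℝ f x (1,0) = -2 * x.1.im * fderiv ℝ f x (0,1))
    (key2 : ∀ x ∈ Ω, fderiv ℝ f x (Complex.I,0) = 2 * x.1.re * fderiv ℝ f x (0,1)) :
    fderiv ℝ f p (0,1) = 0 := by
  have hnh : Ω ∈ nhds p := hΩo.mem_nhds hp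
  set A := fderiv ℝ f with hA
  have hAd : DifferentiableAt ℝ A p := by
    have : ContDiffAt ℝ 1 A p :=
      (hf.contDiffAt hnh).fderiv_right ((WithTop.coe_le_coe.2 le_top))
    exact this.differentiableAt one_ne_zero
  set A' := fderiv ℝ A p with hA'
  have hA'd : HasFDerivAt A A' p := hAd.hasFDerivAt
  have hdiff : ∀ x ∈ Ω, DifferentiableAt ℝ f x := fun x hx =>
    (hf.contDiffAt (hΩo.mem_nhds hx)).differentiableAt (by simp)
  have symm : ∀ v w, A' v w = A' w v := by
    intro v w
    apply second_derivative_symmetric_of_eventually (f := f) (f' := A) _ hA'd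
    filter_upwards [hnh] with x hx
    exact (hdiff x hx).hasFDerivAt
  have happ : ∀ v : ℂ × ℝ, HasFDerivAt (fun x => A x v)
      ((ContinuousLinearMap.apply ℝ ℝ v).comp A') p :=
    fun v => (ContinuousLinearMap.apply ℝ ℝ v).hasFDerivAt.comp p hA'd
  have h_im : HasFDerivAt (fun x : ℂ × ℝ => x.1.im)
      (Complex.imCLM.comp (ContinuousLinearMap.fst ℝ ℂ ℝ)) p :=
    (Complex.imCLM.comp (ContinuousLinearMap.fst ℝ ℂ ℝ)).hasFDerivAt
  have h_re : HasFDerivAt (fun x : ℂ × ℝ => x.1.re)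
      (Complex.reCLM.comp (ContinuousLinearMap.fst ℝ ℂ ℝ)) p :=
    (Complex.reCLM.comp (ContinuousLinearMap.fst ℝ ℂ ℝ)).hasFDerivAt
  have hg1 : HasFDerivAt (fun x => A x (1,0) + 2 * x.1.im * A x (0,1))
      (((ContinuousLinearMap.apply ℝ ℝ ((1:ℂ),(0:ℝ))).comp A') +
        ((2 * p.1.im) • ((ContinuousLinearMap.apply ℝ ℝ ((0:ℂ),(1:ℝ))).comp A')
          + (A p (0,1)) • ((2:ℝ) • (Complex.imCLM.comp (ContinuousLinearMap.fst ℝ ℂ ℝ))))) p :=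
    (happ (1,0)).add ((h_im.const_mul 2).mul (happ (0,1)))
  have hg2 : HasFDerivAt (fun x => A x (Complex.I,0) - 2 * x.1.re * A x (0,1))
      (((ContinuousLinearMap.apply ℝ ℝ ((Complex.I:ℂ),(0:ℝ))).comp A') -
        ((2 * p.1.re) • ((ContinuousLinearMap.apply ℝ ℝ ((0:ℂ),(1:ℝ))).comp A')
          + (A p (0,1)) • ((2:ℝ) • (Complex.reCLM.comp (ContinuousLinearMap.fst ℝ ℂ ℝ))))) p :=
    (happ (Complex.I,0)).sub ((h_re.const_mul 2).mul (happ (0,1)))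
  have hz1 : (fun x => A x (1,0) + 2 * x.1.im * A x (0,1)) =ᶠ[nhds p] (fun _ => (0:ℝ)) := by
    filter_upwards [hnh] with x hx
    rw [key1 x hx]; ring
  have hz2 : (fun x => A x (Complex.I,0) - 2 * x.1.re * A x (0,1)) =ᶠ[nhds p] (fun _ => (0:ℝ)) := by
    filter_upwards [hnh] with x hx
    rw [key2 x hx]; ring
  have hD1 : ((ContinuousLinearMap.apply ℝ ℝ ((1:ℂ),(0:ℝ))).comp A') +
        ((2 * p.1.im) • ((ContinuousLinearMap.apply ℝ ℝ ((0:ℂ),(1:ℝ))).comp A')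
          + (A p (0,1)) • ((2:ℝ) • (Complex.imCLM.comp (ContinuousLinearMap.fst ℝ ℂ ℝ)))) = 0 := by
    rw [← hg1.fderiv, Filter.EventuallyEq.fderiv_eq hz1]
    exact fderiv_const_apply 0
  have hD2 : ((ContinuousLinearMap.apply ℝ ℝ ((Complex.I:ℂ),(0:ℝ))).comp A') -
        ((2 * p.1.re) • ((ContinuousLinearMap.apply ℝ ℝ ((0:ℂ),(1:ℝ))).comp A')
          + (A p (0,1)) • ((2:ℝ) • (Complex.reCLM.comp (ContinuousLinearMap.fst ℝ ℂ ℝ)))) = 0 := by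
    rw [← hg2.fderiv, Filter.EventuallyEq.fderiv_eq hz2]
    exact fderiv_const_apply 0
  have e1 := congrArg (fun (L : (ℂ × ℝ) →L[ℝ] ℝ) => L (Complex.I, 0)) hD1
  have e2 := congrArg (fun (L : (ℂ × ℝ) →L[ℝ] ℝ) => L ((1:ℂ), 0)) hD2
  have e3 := congrArg (fun (L : (ℂ × ℝ) →L[ℝ] ℝ) => L ((0:ℂ), 1)) hD1
  have e4 := congrArg (fun (L : (ℂ × ℝ) →L[ℝ] ℝ) => L ((0:ℂ), 1)) hD2
  simp only [ContinuousLinearMap.add_apply, ContinuousLinearMap.sub_apply,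
    ContinuousLinearMap.smul_apply, ContinuousLinearMap.coe_comp', Function.comp_apply,
    ContinuousLinearMap.apply_apply, ContinuousLinearMap.coe_fst',
    Complex.imCLM_apply, Complex.reCLM_apply, ContinuousLinearMap.zero_apply,
    smul_eq_mul, Complex.I_re, Complex.I_im, Complex.one_re, Complex.one_im,
    Complex.zero_re, Complex.zero_im] at e1 e2 e3 e4
  have s12 := symm (Complex.I, 0) ((1:ℂ), 0)
  have s13 := symm (Complex.I, 0) ((0:ℂ), 1)
  have s23 := symm ((1:ℂ), 0) ((0:ℂ), 1)
  linear_combination (1/4)*e1 - (1/4)*e2 - (1/4)*s12 - (p.1.im/2)*s13 - (p.1.im/2)*e4 - (p.1.re/2)*s23 - (p.1.re/2)*e3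

/-- Uniqueness up to a positive constant of a quadratic differential with prescribed
horizontal trajectories in the kernel of `B₂`: if `q' = f q` with `f > 0` smooth and
both `q` and `q'` annihilate `B₂` on a connected open `Ω ⊆ ℍ`, then `f` is constant. -/
theorem stmt10 (Ω : Set (ℂ × ℝ)) (hΩo : IsOpen Ω) (hΩc : IsConnected Ω)
    (q q' : ℂ × ℝ → ℂ) (f : ℂ × ℝ → ℝ)
    (hq : ContDiffOn ℝ (⊤ : ℕ∞) q Ω) (hq' : ContDiffOn ℝ (⊤ : ℕ∞) q' Ω)
    (hf : ContDiffOn ℝ (⊤ : ℕ∞) f Ω)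
    (hq0 : ∀ p ∈ Ω, q p ≠ 0)
    (hfpos : ∀ p ∈ Ω, 0 < f p)
    (hfq : ∀ p ∈ Ω, q' p = (f p : ℂ) * q p)
    (hB2q : ∀ p ∈ Ω, B2fun q p = 0)
    (hB2q' : ∀ p ∈ Ω, B2fun q' p = 0) :
    ∃ cst : ℝ, ∀ p ∈ Ω, f p = cst := by
  have hdiff : ∀ x ∈ Ω, DifferentiableAt ℝ f x := fun x hx =>
    (hf.contDiffAt (hΩo.mem_nhds hx)).differentiableAt (by simp)
  have hCR := stmt10_stepA Ω hΩo q q' f hq hf hq0 hfpos hfq hB2q hB2q'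
  have key1 : ∀ x ∈ Ω, fderiv ℝ f x (1,0) = -2 * x.1.im * fderiv ℝ f x (0,1) :=
    fun x hx => (stmt10_stepB f x (hdiff x hx) (hCR x hx)).1
  have key2 : ∀ x ∈ Ω, fderiv ℝ f x (Complex.I,0) = 2 * x.1.re * fderiv ℝ f x (0,1) :=
    fun x hx => (stmt10_stepB f x (hdiff x hx) (hCR x hx)).2
  have hc : ∀ x ∈ Ω, fderiv ℝ f x (0,1) = 0 :=
    fun x hx => stmt10_stepC Ω hΩo f hf x hx key1 key2
  -- the full derivative vanishes on Ω
  have hderiv0 : ∀ x ∈ Ω, fderiv ℝ f x = 0 := by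
    intro x hx
    apply ContinuousLinearMap.ext
    rintro ⟨v, s⟩
    have hdecomp : ((v, s) : ℂ × ℝ)
        = v.re • ((1:ℂ), (0:ℝ)) + v.im • ((Complex.I:ℂ), (0:ℝ)) + s • ((0:ℂ), (1:ℝ)) := by
      apply Prod.ext <;> simp [Complex.real_smul]
    rw [hdecomp]
    simp only [map_add, map_smul, smul_eq_mul, ContinuousLinearMap.zero_apply]
    rw [key1 x hx, key2 x hx, hc x hx]
    ring
  -- local constancy: around each point of Ω there is a ball where f is constant
  have hloc : ∀ x ∈ Ω, ∃ r > 0, Metric.ball x r ⊆ Ω ∧ ∀ y ∈ Metric.ball x r, f y = f x := by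
    intro x hx
    obtain ⟨r, hr, hball⟩ := Metric.isOpen_iff.1 hΩo x hx
    refine ⟨r, hr, hball, fun y hy => ?_⟩
    have := (convex_ball x r).is_const_of_fderivWithin_eq_zero
      (𝕜 := ℝ) (f := f)
      (fun z hz => (hdiff z (hball hz)).differentiableWithinAt)
      (fun z hz => by
        rw [fderivWithin_of_isOpen Metric.isOpen_ball hz]
        exact hderiv0 z (hball hz))
      hy (Metric.mem_ball_self hr)
    exact this
  -- connectedness argument
  obtain ⟨p₀, hp₀⟩ := hΩc.nonempty
  refine ⟨f p₀, ?_⟩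
  set u : Set (ℂ × ℝ) := ⋃ (x : {x : ℂ × ℝ // x ∈ Ω ∧ f x = f p₀}),
    Metric.ball x.1 (hloc x.1 x.2.1).choose with hu
  set v : Set (ℂ × ℝ) := ⋃ (x : {x : ℂ × ℝ // x ∈ Ω ∧ f x ≠ f p₀}),
    Metric.ball x.1 (hloc x.1 x.2.1).choose with hv
  have hval : ∀ x (hx : x ∈ Ω) y, y ∈ Metric.ball x (hloc x hx).choose → y ∈ Ω ∧ f y = f x := by
    intro x hx y hy
    obtain ⟨hr, hball, hconst⟩ := (hloc x hx).choose_spec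
    exact ⟨hball hy, hconst y hy⟩
  have huo : IsOpen u := isOpen_iUnion fun x => Metric.isOpen_ball
  have hvo : IsOpen v := isOpen_iUnion fun x => Metric.isOpen_ball
  have hdisj : Disjoint u v := by
    rw [Set.disjoint_left]
    rintro y hyu hyv
    obtain ⟨_, ⟨⟨x₁, hx₁⟩, rfl⟩, hy₁⟩ := hyu
    obtain ⟨_, ⟨⟨x₂, hx₂⟩, rfl⟩, hy₂⟩ := hyv
    have h1 := (hval x₁ hx₁.1 y hy₁).2
    have h2 := (hval x₂ hx₂.1 y hy₂).2
    exact hx₂.2 (by rw [← h2, h1, hx₁.2])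
  have hsub : Ω ⊆ u ∪ v := by
    intro x hx
    by_cases h : f x = f p₀
    · left
      exact Set.mem_iUnion.2 ⟨⟨x, hx, h⟩, Metric.mem_ball_self (hloc x hx).choose_spec.1⟩
    · right
      exact Set.mem_iUnion.2 ⟨⟨x, hx, h⟩, Metric.mem_ball_self (hloc x hx).choose_spec.1⟩
  rcases hΩc.isPreconnected.subset_or_subset huo hvo hdisj hsub with h | h
  · intro p hp
    obtain ⟨_, ⟨⟨x₁, hx₁⟩, rfl⟩, hp₁⟩ := h hp
    rw [(hval x₁ hx₁.1 p hp₁).2, hx₁.2]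
  · exfalso
    have : p₀ ∈ v := h hp₀
    obtain ⟨_, ⟨⟨x₂, hx₂⟩, rfl⟩, hp₂⟩ := this
    exact hx₂.2 ((hval x₂ hx₂.1 p₀ hp₂).2 ▸ rfl)
end

section
/- For r > 1, ∫_{A_r} |z|⁴ / (t² + |z|⁴)² dL³(z,t) = 2π ln(r) ∫₀^π sin²(y) dy = π² ln(r), where A_r = {(z,t) ∈ ℂ × ℝ : 1 < (t² + |z|⁴)^{1/4} < r}. -/
/-!
Under `(z, t) ↦ (t, |z|²)`, Lebesgue measure on `ℂ × ℝ` pushes forward to `π` times Lebesgue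
measure on the upper half-plane `{u > 0}` (polar coordinates in `ℂ`, then `u = ρ²`), and the
integrand becomes `u² / (t² + u²)²` on the annulus `1 < t² + u² < r⁴`. In polar coordinates
`(t, u) = (ρ cos y, ρ sin y)` of the half-plane, with Jacobian `ρ`, it becomes `sin² y / ρ` on
`(1, r²) × (0, π)`, whose integral is `π · 2 ln r · ∫₀^π sin² y dy`. The first change of
variables is an identity of push-forward measures, so it needs no integrability hypothesis.
-/

open Set Complex MeasureTheory
open scoped ENNReal

namespace Complex

theorem lintegral_comp_norm_sq {g : ℝ → ℝ≥0∞} (hg : Measurable g) :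
    ∫⁻ z : ℂ, g (‖z‖ ^ 2) = ENNReal.ofReal Real.pi * ∫⁻ u in Ioi 0, g u := by
  have himage : (· ^ 2) '' Ioi (0 : ℝ) = Ioi 0 := by
    ext u
    constructor
    · rintro ⟨x, hx, rfl⟩
      exact pow_pos (mem_Ioi.1 hx) 2
    · intro hu
      exact ⟨√u, Real.sqrt_pos.2 hu, Real.sq_sqrt (le_of_lt hu)⟩
  have hsubst : ∫⁻ u in Ioi 0, g u = ∫⁻ x in Ioi 0, ENNReal.ofReal (2 * x) * g (x ^ 2) := by
    conv_lhs => rw [← himage]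
    rw [lintegral_image_eq_lintegral_abs_deriv_mul measurableSet_Ioi
      (fun x _ => (hasDerivAt_pow 2 x).hasDerivWithinAt)
      ((pow_left_strictMonoOn₀ two_ne_zero).injOn.mono fun x hx => le_of_lt hx)]
    refine setLIntegral_congr_fun measurableSet_Ioi fun x hx => ?_
    simp [abs_of_pos (show (0 : ℝ) < x from hx)]
  set f : ℝ → ℝ≥0∞ := fun x => ENNReal.ofReal x * g (x ^ 2)
  rw [← Complex.lintegral_comp_polarCoord_symm, polarCoord_target,
    setLIntegral_congr_fun (measurableSet_Ioi.prod measurableSet_Ioo)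
      (g := fun p => f p.1 * (fun _ => 1) p.2) fun p hp => by
        simp [f, abs_of_pos (show (0 : ℝ) < p.1 from hp.1)],
    Measure.volume_eq_prod, ← Measure.prod_restrict,
    lintegral_prod_mul (f := f) (g := fun _ => 1) (by fun_prop) (by fun_prop), hsubst]
  simp only [f, lintegral_const, Measure.restrict_apply_univ, Real.volume_Ioo, one_mul,
    ENNReal.ofReal_mul zero_le_two]
  simp_rw [mul_assoc (ENNReal.ofReal 2)]
  rw [lintegral_const_mul' _ _ ENNReal.ofReal_ne_top, sub_neg_eq_add, ← two_mul,
    ENNReal.ofReal_mul zero_le_two]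
  ring

theorem map_volume_norm_sq :
    (volume : Measure ℂ).map (‖·‖ ^ 2) = ENNReal.ofReal Real.pi • volume.restrict (Ioi 0) := by
  ext s hs
  rw [Measure.map_apply (by fun_prop) hs, Measure.smul_apply, smul_eq_mul,
    ← lintegral_indicator_one (hs.preimage (by fun_prop)), ← lintegral_indicator_one hs]
  exact lintegral_comp_norm_sq (measurable_one.indicator hs)

theorem map_volume_snd_norm_sq_fst :
    (volume : Measure (ℂ × ℝ)).map (fun p => (p.2, ‖p.1‖ ^ 2)) =
      ENNReal.ofReal Real.pi • volume.restrict (univ ×ˢ Ioi 0) := by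
  have hcomp : (fun p : ℂ × ℝ => (p.2, ‖p.1‖ ^ 2)) = Prod.map id (‖·‖ ^ 2) ∘ Prod.swap := rfl
  rw [hcomp, ← Measure.map_map (by fun_prop) measurable_swap, Measure.volume_eq_prod,
    Measure.measurePreserving_swap.map_eq, ← Measure.map_prod_map _ _ measurable_id (by fun_prop),
    Measure.map_id, map_volume_norm_sq, Measure.prod_smul_right,
    Measure.volume_eq_prod (α := ℝ), ← Measure.prod_restrict, Measure.restrict_univ]

end Complex

section HalfPlane

variable {E : Type*} [NormedAddCommGroup E] [NormedSpace ℝ E]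

theorem integral_comp_snd_norm_sq_fst {G : ℝ × ℝ → E}
    (hG : AEStronglyMeasurable G (volume.restrict (univ ×ˢ Ioi 0))) :
    ∫ p : ℂ × ℝ, G (p.2, ‖p.1‖ ^ 2) = Real.pi • ∫ q in univ ×ˢ Ioi 0, G q := by
  rw [← integral_map (by fun_prop) (Complex.map_volume_snd_norm_sq_fst ▸ hG.smul_measure _),
    Complex.map_volume_snd_norm_sq_fst, integral_smul_measure,
    ENNReal.toReal_ofReal Real.pi_pos.le]

theorem polarCoord_target_inter_preimage_upperHalfPlane :
    polarCoord.target ∩ polarCoord.symm ⁻¹' (univ ×ˢ Ioi 0) = Ioi 0 ×ˢ Ioo 0 Real.pi := by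
  ext ⟨ρ, θ⟩
  simp only [polarCoord_target, polarCoord_symm_apply, mem_inter_iff, mem_prod, mem_Ioi,
    mem_Ioo, mem_preimage, mem_univ, true_and]
  constructor
  · rintro ⟨⟨hρ, hθ, hθ'⟩, hsin⟩
    refine ⟨hρ, ?_, hθ'⟩
    by_contra! h
    nlinarith [Real.sin_nonpos_of_nonpos_of_neg_pi_le h hθ.le]
  · rintro ⟨hρ, hθ, hθ'⟩
    exact ⟨⟨hρ, by linarith [Real.pi_pos], hθ'⟩, mul_pos hρ (Real.sin_pos_of_pos_of_lt_pi hθ hθ')⟩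

theorem integral_upperHalfPlane_eq_polarCoord (f : ℝ × ℝ → E) :
    ∫ q in univ ×ˢ Ioi 0, f q = ∫ p in Ioi 0 ×ˢ Ioo 0 Real.pi, p.1 • f (polarCoord.symm p) := by
  have hS : MeasurableSet (univ ×ˢ Ioi (0 : ℝ)) :=
    (MeasurableSet.univ (α := ℝ)).prod measurableSet_Ioi
  rw [← integral_indicator hS, ← integral_comp_polarCoord_symm,
    ← polarCoord_target_inter_preimage_upperHalfPlane,
    ← setIntegral_indicator (hS.preimage continuous_polarCoord_symm.measurable)]
  congr 1 with p
  by_cases h : polarCoord.symm p ∈ univ ×ˢ Ioi 0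
  · rw [indicator_of_mem h, indicator_of_mem (mem_preimage.2 h)]
  · rw [indicator_of_notMem h, indicator_of_notMem (fun h' => h (mem_preimage.1 h')), smul_zero]

end HalfPlane

def planeAnnulus (a b : ℝ) : Set (ℝ × ℝ) :=
  {q | a ^ 2 < q.1 ^ 2 + q.2 ^ 2 ∧ q.1 ^ 2 + q.2 ^ 2 < b ^ 2}

theorem measurableSet_planeAnnulus (a b : ℝ) : MeasurableSet (planeAnnulus a b) :=
  have hc : Measurable fun q : ℝ × ℝ => q.1 ^ 2 + q.2 ^ 2 := by fun_prop
  (measurableSet_lt measurable_const hc).inter (measurableSet_lt hc measurable_const)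

theorem polarCoord_symm_fst_sq_add_snd_sq (p : ℝ × ℝ) :
    (polarCoord.symm p).1 ^ 2 + (polarCoord.symm p).2 ^ 2 = p.1 ^ 2 := by
  simp only [polarCoord_symm_apply]
  linear_combination p.1 ^ 2 * Real.cos_sq_add_sin_sq p.2

theorem polarCoord_symm_mem_planeAnnulus_iff {a b ρ θ : ℝ} (ha : 0 ≤ a) (hb : 0 ≤ b)
    (hρ : 0 ≤ ρ) : polarCoord.symm (ρ, θ) ∈ planeAnnulus a b ↔ ρ ∈ Ioo a b := by
  simp only [planeAnnulus, mem_ofPred_eq, polarCoord_symm_fst_sq_add_snd_sq, mem_Ioo,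
    sq_lt_sq₀ ha hρ, sq_lt_sq₀ hρ hb]

theorem smul_indicator_planeAnnulus_polarCoord_symm {a b ρ θ : ℝ} (ha : 0 ≤ a) (hb : 0 ≤ b)
    (hρ : 0 < ρ) :
    ρ • (planeAnnulus a b).indicator (fun q => q.2 ^ 2 / (q.1 ^ 2 + q.2 ^ 2) ^ 2)
        (polarCoord.symm (ρ, θ)) = (Ioo a b).indicator (·⁻¹) ρ * Real.sin θ ^ 2 := by
  by_cases h : ρ ∈ Ioo a b
  · rw [indicator_of_mem ((polarCoord_symm_mem_planeAnnulus_iff ha hb hρ.le).2 h),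
      indicator_of_mem h, polarCoord_symm_fst_sq_add_snd_sq, polarCoord_symm_apply, smul_eq_mul]
    field_simp
  · rw [indicator_of_notMem (mt (polarCoord_symm_mem_planeAnnulus_iff ha hb hρ.le).1 h),
      indicator_of_notMem h, smul_zero, zero_mul]

theorem integral_Ioi_indicator_Ioo_inv {a b : ℝ} (ha : 0 < a) (hab : a ≤ b) :
    ∫ ρ in Ioi 0, (Ioo a b).indicator (·⁻¹) ρ = Real.log (b / a) := by
  rw [setIntegral_indicator measurableSet_Ioo,
    inter_eq_self_of_subset_right (show Ioo a b ⊆ Ioi 0 from fun x hx => ha.trans hx.1),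
    ← integral_Ioc_eq_integral_Ioo, ← intervalIntegral.integral_of_le hab, integral_inv]
  rw [uIcc_of_le hab]
  exact fun h => ha.not_ge h.1

theorem koranyiAnnulus_eq_preimage_planeAnnulus {r : ℝ} (hr : 0 ≤ r) :
    {p : ℂ × ℝ | 1 < (p.2 ^ 2 + ‖p.1‖ ^ 4) ^ (1/4 : ℝ) ∧ (p.2 ^ 2 + ‖p.1‖ ^ 4) ^ (1/4 : ℝ) < r}
      = (fun p : ℂ × ℝ => (p.2, ‖p.1‖ ^ 2)) ⁻¹' planeAnnulus 1 (r ^ 2) := by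
  ext p
  have hD : 0 ≤ p.2 ^ 2 + ‖p.1‖ ^ 4 := by positivity
  have h4 : (0 : ℝ) < 4 := by norm_num
  simp only [mem_ofPred_eq, mem_preimage, planeAnnulus, one_div,
    Real.lt_rpow_inv_iff_of_pos zero_le_one hD h4, Real.rpow_inv_lt_iff_of_pos hD hr h4]
  norm_num [← pow_mul]

/-- The integral arising in the modulus of the foliation of the Korányi annulus
`A_r = {1 < (t²+|z|⁴)^{1/4} < r}` by radial curves:
`∫_{A_r} |z|⁴/(t²+|z|⁴)² dL³ = 2π ln(r) ∫₀^π sin²(y) dy = π² ln(r)`. -/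
theorem stmt15 (r : ℝ) (hr : 1 < r) :
    (∫ p in {p : ℂ × ℝ | 1 < (p.2 ^ 2 + ‖p.1‖ ^ 4) ^ (1/4 : ℝ) ∧
        (p.2 ^ 2 + ‖p.1‖ ^ 4) ^ (1/4 : ℝ) < r},
      ‖p.1‖ ^ 4 / (p.2 ^ 2 + ‖p.1‖ ^ 4) ^ 2)
      = 2 * Real.pi * Real.log r * ∫ y in (0:ℝ)..Real.pi, Real.sin y ^ 2 ∧
    (∫ p in {p : ℂ × ℝ | 1 < (p.2 ^ 2 + ‖p.1‖ ^ 4) ^ (1/4 : ℝ) ∧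
        (p.2 ^ 2 + ‖p.1‖ ^ 4) ^ (1/4 : ℝ) < r},
      ‖p.1‖ ^ 4 / (p.2 ^ 2 + ‖p.1‖ ^ 4) ^ 2)
      = Real.pi ^ 2 * Real.log r := by
  set φ : ℝ × ℝ → ℝ := fun q => q.2 ^ 2 / (q.1 ^ 2 + q.2 ^ 2) ^ 2
  have hK := measurableSet_planeAnnulus 1 (r ^ 2)
  have key : (∫ p in {p : ℂ × ℝ | 1 < (p.2 ^ 2 + ‖p.1‖ ^ 4) ^ (1/4 : ℝ) ∧
        (p.2 ^ 2 + ‖p.1‖ ^ 4) ^ (1/4 : ℝ) < r}, ‖p.1‖ ^ 4 / (p.2 ^ 2 + ‖p.1‖ ^ 4) ^ 2)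
      = 2 * Real.pi * Real.log r * ∫ y in (0:ℝ)..Real.pi, Real.sin y ^ 2 := calc
    _ = ∫ p : ℂ × ℝ, (planeAnnulus 1 (r ^ 2)).indicator φ (p.2, ‖p.1‖ ^ 2) := by
      rw [koranyiAnnulus_eq_preimage_planeAnnulus (by linarith),
        ← integral_indicator (hK.preimage (by fun_prop))]
      congr 1 with p
      rw [← indicator_comp_right (fun p : ℂ × ℝ => (p.2, ‖p.1‖ ^ 2))]
      congr 1 with p
      simp only [φ, Function.comp]
      ring
    _ = Real.pi * ∫ p in Ioi 0 ×ˢ Ioo 0 Real.pi,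
          (Ioo 1 (r ^ 2)).indicator (·⁻¹) p.1 * Real.sin p.2 ^ 2 := by
      rw [integral_comp_snd_norm_sq_fst
          ((by fun_prop : Measurable φ).indicator hK).aestronglyMeasurable,
        integral_upperHalfPlane_eq_polarCoord, smul_eq_mul,
        setIntegral_congr_fun (measurableSet_Ioi.prod measurableSet_Ioo) fun p hp =>
          smul_indicator_planeAnnulus_polarCoord_symm zero_le_one (sq_nonneg r) hp.1]
    _ = _ := by
      rw [Measure.volume_eq_prod, setIntegral_prod_mul _ fun θ => Real.sin θ ^ 2,
        integral_Ioi_indicator_Ioo_inv one_pos (one_le_pow₀ hr.le),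
        intervalIntegral.integral_of_le Real.pi_pos.le, integral_Ioc_eq_integral_Ioo, div_one,
        Real.log_pow]
      push_cast
      ring
  refine ⟨key, ?_⟩
  rw [key, integral_sin_sq, Real.sin_pi, Real.sin_zero]
  ring
end
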